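/- Let H be a Hopf algebra with nonzero right integral ∫_r (i.e., ∫_r(a₁)a₂ = ∫_r(a)·1 for all a). If the antipode S is injective, then for all g, h ∈ H the identity ∫_r(h₁S(g))h₂ = S²(g₁)∫_r(hS(g₂)) holds. -/

import Mathlib

open TensorProduct LinearMap

noncomputable section

variable (k : Type*) [Field k] (H : Type*) [Ring H] [HopfAlgebra k H]

/-- `∫` is a left integral on `H`: `a₁ ∫(a₂) = ∫(a) 1` for all `a`. -/
def IsLeftIntegral (I : H →ₗ[k] k) : Prop :=
  ∀ a : H, TensorProduct.rid k H (LinearMap.lTensor H I (Coalgebra.comul a)) = I a • (1 : H)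

/-- `∫` is a right integral on `H`: `∫(a₁) a₂ = ∫(a) 1` for all `a`. -/
def IsRightIntegral (I : H →ₗ[k] k) : Prop :=
  ∀ a : H, TensorProduct.lid k H (LinearMap.rTensor H I (Coalgebra.comul a)) = I a • (1 : H)

/-- The linear map `h ⊗ g ↦ ∫(h S(g))`. -/
def intPair (I : H →ₗ[k] k) : H ⊗[k] H →ₗ[k] k :=
  I ∘ₗ LinearMap.mul' k H ∘ₗ LinearMap.lTensor H (HopfAlgebra.antipode (R := k))

/-- The linear map `g ⊗ h ↦ h₁ ∫(h₂ S(g))` (the convolution product). -/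
def convMap (I : H →ₗ[k] k) : H ⊗[k] H →ₗ[k] H :=
  (TensorProduct.rid k H).toLinearMap
    ∘ₗ LinearMap.lTensor H (intPair k H I)
    ∘ₗ (TensorProduct.assoc k H H H).toLinearMap
    ∘ₗ (Coalgebra.comul (R := k)).rTensor H
    ∘ₗ (TensorProduct.comm k H H).toLinearMap

/-- The convolution product `g * h := h₁ ∫(h₂ S(g))`. -/
def convProd (I : H →ₗ[k] k) (g h : H) : H := convMap k H I (g ⊗ₜ h)

/-- The linear map `g ⊗ h ↦ ∫(h S(g₁)) g₂`. -/
def convMap' (I : H →ₗ[k] k) : H ⊗[k] H →ₗ[k] H :=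
  (TensorProduct.lid k H).toLinearMap
    ∘ₗ (intPair k H I).rTensor H
    ∘ₗ (TensorProduct.assoc k H H H).symm.toLinearMap
    ∘ₗ LinearMap.lTensor H (Coalgebra.comul (R := k))
    ∘ₗ (TensorProduct.comm k H H).toLinearMap

/-- The linear map `g ⊗ h ↦ ∫(h₁ S(g)) h₂`. -/
def intMapL (I : H →ₗ[k] k) : H ⊗[k] H →ₗ[k] H :=
  (TensorProduct.lid k H).toLinearMap
    ∘ₗ (intPair k H I).rTensor H
    ∘ₗ (TensorProduct.assoc k H H H).symm.toLinearMap
    ∘ₗ LinearMap.lTensor H (TensorProduct.comm k H H).toLinearMap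
    ∘ₗ (TensorProduct.assoc k H H H).toLinearMap
    ∘ₗ (Coalgebra.comul (R := k)).rTensor H
    ∘ₗ (TensorProduct.comm k H H).toLinearMap

/-- The linear map `g ⊗ h ↦ S²(g₁) ∫(h S(g₂))`. -/
def intMapR (I : H →ₗ[k] k) : H ⊗[k] H →ₗ[k] H :=
  (TensorProduct.rid k H).toLinearMap
    ∘ₗ LinearMap.lTensor H ((intPair k H I) ∘ₗ (TensorProduct.comm k H H).toLinearMap)
    ∘ₗ (TensorProduct.assoc k H H H).toLinearMap
    ∘ₗ LinearMap.rTensor H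
        (LinearMap.rTensor H
          (HopfAlgebra.antipode (R := k) ∘ₗ HopfAlgebra.antipode (R := k)))
    ∘ₗ (Coalgebra.comul (R := k)).rTensor H


open TensorProduct LinearMap Coalgebra HopfAlgebra

section AuxSection
variable {k H}

namespace RIAux

lemma counit_left_sum {a : H} {ι : Type*} (r : Coalgebra.Repr k a ι) :
    ∑ i ∈ r.index, counit (R := k) (r.left i) • r.right i = a := by
  have h := congrArg (TensorProduct.lid k H).toLinearMap (Coalgebra.sum_counit_tmul_eq r)
  rw [map_sum] at h
  simp only [LinearEquiv.coe_coe, lid_tmul, one_smul] at h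
  exact h

lemma counit_right_sum {a : H} {ι : Type*} (r : Coalgebra.Repr k a ι) :
    ∑ i ∈ r.index, counit (R := k) (r.right i) • r.left i = a := by
  have h := congrArg (TensorProduct.rid k H).toLinearMap (Coalgebra.sum_tmul_counit_eq r)
  rw [map_sum] at h
  simp only [LinearEquiv.coe_coe, rid_tmul, one_smul] at h
  exact h

lemma expand_rTensor {a : H} {ι : Type*} (r : Coalgebra.Repr k a ι) {κ : Type*} (rl : ∀ i : r.ι, Coalgebra.Repr k (r.left i) κ) :
    (TensorProduct.assoc k H H H) ((Coalgebra.comul (R := k)).rTensor H (Coalgebra.comul a)) =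
      ∑ i ∈ r.index, ∑ j ∈ (rl i).index,
        (rl i).left j ⊗ₜ[k] ((rl i).right j ⊗ₜ[k] r.right i) := by
  rw [show ((TensorProduct.assoc k H H H) ((Coalgebra.comul (R := k)).rTensor H (Coalgebra.comul a)))
      = (TensorProduct.assoc k H H H).toLinearMap ((Coalgebra.comul (R := k)).rTensor H (Coalgebra.comul a)) from rfl]
  rw [← r.eq, map_sum, map_sum]
  refine Finset.sum_congr rfl fun i _ => ?_
  rw [rTensor_tmul, ← (rl i).eq, sum_tmul, map_sum]
  simp

lemma expand_lTensor {a : H} {ι : Type*} (r : Coalgebra.Repr k a ι) {Λ : Type*} (rr : ∀ i : r.ι, Coalgebra.Repr k (r.right i) Λ) :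
    (Coalgebra.comul (R := k)).lTensor H (Coalgebra.comul a) =
      ∑ i ∈ r.index, ∑ j ∈ (rr i).index,
        r.left i ⊗ₜ[k] ((rr i).left j ⊗ₜ[k] (rr i).right j) := by
  rw [← r.eq, map_sum]
  refine Finset.sum_congr rfl fun i _ => ?_
  rw [lTensor_tmul, ← (rr i).eq, tmul_sum]

lemma coassoc_repr {a : H} {ι : Type*} (r : Coalgebra.Repr k a ι)
    {κ : Type*} (rl : ∀ i : r.ι, Coalgebra.Repr k (r.left i) κ)
    {Λ : Type*} (rr : ∀ i : r.ι, Coalgebra.Repr k (r.right i) Λ) :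
    ∑ i ∈ r.index, ∑ j ∈ (rl i).index,
        (rl i).left j ⊗ₜ[k] ((rl i).right j ⊗ₜ[k] r.right i) =
      ∑ i ∈ r.index, ∑ j ∈ (rr i).index,
        r.left i ⊗ₜ[k] ((rr i).left j ⊗ₜ[k] (rr i).right j) := by
  rw [← expand_rTensor r rl, ← expand_lTensor r rr, Coalgebra.coassoc_apply]

end RIAux
open RIAux
namespace RIAux

variable (k H) in
/-- Convolution product of linear maps `H →ₗ[k] A`. -/
def conv {A : Type*} [Semiring A] [Algebra k A] (f g : H →ₗ[k] A) : H →ₗ[k] A :=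
  LinearMap.mul' k A ∘ₗ TensorProduct.map f g ∘ₗ Coalgebra.comul

lemma conv_repr {A : Type*} [Semiring A] [Algebra k A] (f g : H →ₗ[k] A) {a : H} {ι : Type*}
    (r : Coalgebra.Repr k a ι) :
    conv k H f g a = ∑ i ∈ r.index, f (r.left i) * g (r.right i) := by
  simp only [conv, comp_apply, ← r.eq, map_sum, TensorProduct.map_tmul, mul'_apply]

variable (k H) in
/-- The unit for convolution. -/
def cunit (A : Type*) [Semiring A] [Algebra k A] : H →ₗ[k] A :=
  Algebra.linearMap k A ∘ₗ Coalgebra.counit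

lemma conv_cunit_left {A : Type*} [Semiring A] [Algebra k A] (f : H →ₗ[k] A) :
    conv k H (cunit k H A) f = f := by
  ext a
  rw [conv_repr _ _ (ℛ k a)]
  have h := congrArg f (counit_left_sum (ℛ k a))
  rw [map_sum] at h
  simp only [map_smul] at h
  calc ∑ i ∈ (ℛ k a).index, cunit k H A ((ℛ k a).left i) * f ((ℛ k a).right i)
      = ∑ i ∈ (ℛ k a).index, counit ((ℛ k a).left i) • f ((ℛ k a).right i) := by
        refine Finset.sum_congr rfl fun i _ => ?_
        rw [cunit, comp_apply, Algebra.linearMap_apply, ← Algebra.smul_def]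
    _ = f a := h

lemma conv_cunit_right {A : Type*} [Semiring A] [Algebra k A] (f : H →ₗ[k] A) :
    conv k H f (cunit k H A) = f := by
  ext a
  rw [conv_repr _ _ (ℛ k a)]
  have h := congrArg f (counit_right_sum (ℛ k a))
  rw [map_sum] at h
  simp only [map_smul] at h
  calc ∑ i ∈ (ℛ k a).index, f ((ℛ k a).left i) * cunit k H A ((ℛ k a).right i)
      = ∑ i ∈ (ℛ k a).index, counit ((ℛ k a).right i) • f ((ℛ k a).left i) := by
        refine Finset.sum_congr rfl fun i _ => ?_
        rw [cunit, comp_apply, Algebra.linearMap_apply, ← Algebra.commutes, ← Algebra.smul_def]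
    _ = f a := h

lemma conv_assoc {A : Type*} [Semiring A] [Algebra k A] (f g e : H →ₗ[k] A) :
    conv k H (conv k H f g) e = conv k H f (conv k H g e) := by
  ext a
  set r := ℛ k a with hr
  set rl : ∀ i : r.ι, Coalgebra.Repr k (r.left i) (H × H) := fun i => ℛ k (r.left i)
  set rr : ∀ i : r.ι, Coalgebra.Repr k (r.right i) (H × H) := fun i => ℛ k (r.right i)
  -- the trilinear evaluation map
  set M : H ⊗[k] (H ⊗[k] H) →ₗ[k] A :=
    LinearMap.mul' k A ∘ₗ TensorProduct.map f (LinearMap.mul' k A ∘ₗ TensorProduct.map g e) with hM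
  have hMt : ∀ x y z : H, M (x ⊗ₜ[k] (y ⊗ₜ[k] z)) = f x * (g y * e z) := by
    intro x y z; simp [hM]
  have key := congrArg M (coassoc_repr r rl rr)
  rw [map_sum, map_sum] at key
  simp only [map_sum, hMt] at key
  calc (conv k H (conv k H f g) e) a
      = ∑ i ∈ r.index, (conv k H f g) (r.left i) * e (r.right i) := conv_repr _ _ r
    _ = ∑ i ∈ r.index, ∑ j ∈ (rl i).index, f ((rl i).left j) * (g ((rl i).right j) * e (r.right i)) := by
        refine Finset.sum_congr rfl fun i _ => ?_
        rw [conv_repr _ _ (rl i), Finset.sum_mul]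
        exact Finset.sum_congr rfl fun j _ => mul_assoc _ _ _
    _ = ∑ i ∈ r.index, ∑ j ∈ (rr i).index, f (r.left i) * (g ((rr i).left j) * e ((rr i).right j)) := key
    _ = ∑ i ∈ r.index, f (r.left i) * (conv k H g e) (r.right i) := by
        refine Finset.sum_congr rfl fun i _ => ?_
        rw [conv_repr _ _ (rr i), Finset.mul_sum]
    _ = (conv k H f (conv k H g e)) a := (conv_repr _ _ r).symm

lemma conv_unique {A : Type*} [Semiring A] [Algebra k A] {m f g : H →ₗ[k] A}
    (h1 : conv k H m f = cunit k H A) (h2 : conv k H g m = cunit k H A) : f = g := by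
  have : conv k H g (conv k H m f) = conv k H (conv k H g m) f := (conv_assoc g m f).symm
  rw [h1, h2, conv_cunit_right, conv_cunit_left] at this
  exact this.symm

end RIAux

namespace RIAux

variable (k H) in
/-- The map `a ↦ ∑ S(a₂) ⊗ S(a₁)`. -/
def antiComul : H →ₗ[k] H ⊗[k] H :=
  (TensorProduct.comm k H H).toLinearMap
    ∘ₗ TensorProduct.map (antipode (R := k)) (antipode (R := k))
    ∘ₗ Coalgebra.comul

lemma antiComul_apply {a : H} {ι : Type*} (r : Coalgebra.Repr k a ι) :
    antiComul k H a = ∑ i ∈ r.index,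
      antipode (R := k) (r.right i) ⊗ₜ[k] antipode (R := k) (r.left i) := by
  simp only [antiComul, comp_apply, ← r.eq, map_sum, TensorProduct.map_tmul,
    LinearEquiv.coe_coe, comm_tmul]

lemma conv_comul_comulS : conv k H (Coalgebra.comul)
    ((Coalgebra.comul (R := k) (A := H)) ∘ₗ antipode (R := k)) = cunit k H (H ⊗[k] H) := by
  ext a
  rw [conv_repr _ _ (ℛ k a)]
  calc ∑ i ∈ (ℛ k a).index,
        Coalgebra.comul (R := k) ((ℛ k a).left i) *
          (Coalgebra.comul (R := k) ∘ₗ antipode (R := k)) ((ℛ k a).right i)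
      = ∑ i ∈ (ℛ k a).index,
          Coalgebra.comul (R := k) ((ℛ k a).left i * antipode (R := k) ((ℛ k a).right i)) := by
        refine Finset.sum_congr rfl fun i _ => ?_
        rw [comp_apply, Bialgebra.comul_mul]
    _ = Coalgebra.comul (R := k) (∑ i ∈ (ℛ k a).index,
          (ℛ k a).left i * antipode (R := k) ((ℛ k a).right i)) := (map_sum _ _ _).symm
    _ = cunit k H (H ⊗[k] H) a := by
        rw [HopfAlgebra.sum_mul_antipode_eq_smul (ℛ k a), map_smul, Bialgebra.comul_one,
          cunit, comp_apply, Algebra.linearMap_apply, Algebra.smul_def, mul_one]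

lemma conv_antiComul_comul :
    conv k H (antiComul k H) Coalgebra.comul = cunit k H (H ⊗[k] H) := by
  ext a
  set r := ℛ k a with hrdef
  set rl : ∀ i : r.ι, Coalgebra.Repr k (r.left i) (H × H) := fun i => ℛ k (r.left i) with hrl
  -- the "multiply by antiComul of first leg" map
  set P : H ⊗[k] (H ⊗[k] H) →ₗ[k] H ⊗[k] H :=
    LinearMap.mul' k (H ⊗[k] H) ∘ₗ LinearMap.rTensor (H ⊗[k] H) (antiComul k H) with hP
  have hPt : ∀ (x : H) (w : H ⊗[k] H), P (x ⊗ₜ[k] w) = antiComul k H x * w := by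
    intro x w; simp [hP]
  have step1 : (conv k H (antiComul k H) Coalgebra.comul) a
      = P ((Coalgebra.comul (R := k)).lTensor H (Coalgebra.comul a)) := by
    rw [conv_repr _ _ r, ← r.eq, map_sum, map_sum]
    exact Finset.sum_congr rfl fun i _ => by rw [lTensor_tmul, hPt]
  have step2 : P ((Coalgebra.comul (R := k)).lTensor H (Coalgebra.comul a))
      = ∑ i ∈ r.index, ∑ j ∈ (rl i).index,
          antiComul k H ((rl i).left j) * ((rl i).right j ⊗ₜ[k] r.right i) := by
    rw [← Coalgebra.coassoc_apply, expand_rTensor r rl, map_sum]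
    exact Finset.sum_congr rfl fun i _ => by rw [map_sum]; exact Finset.sum_congr rfl fun j _ => hPt _ _
  rw [step1, step2]
  -- now collapse each `i`-term
  have step3 : ∀ i ∈ r.index, ∑ j ∈ (rl i).index,
      antiComul k H ((rl i).left j) * ((rl i).right j ⊗ₜ[k] r.right i)
      = (1 : H) ⊗ₜ[k] (antipode (R := k) (r.left i) * r.right i) := by
    intro i _
    set rll : ∀ j : (rl i).ι, Coalgebra.Repr k ((rl i).left j) (H × H) := fun j => ℛ k ((rl i).left j)
    set rlr : ∀ j : (rl i).ι, Coalgebra.Repr k ((rl i).right j) (H × H) := fun j => ℛ k ((rl i).right j)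
    set Q : H ⊗[k] (H ⊗[k] H) →ₗ[k] H ⊗[k] H :=
      TensorProduct.map (LinearMap.mul' k H ∘ₗ LinearMap.rTensor H (antipode (R := k)))
          (LinearMap.mulRight k (r.right i) ∘ₗ antipode (R := k))
        ∘ₗ (TensorProduct.comm k H (H ⊗[k] H)).toLinearMap with hQ
    have hQt : ∀ x y z : H, Q (x ⊗ₜ[k] (y ⊗ₜ[k] z))
        = (antipode (R := k) y * z) ⊗ₜ[k] (antipode (R := k) x * r.right i) := by
      intro x y z; simp [hQ]
    have key := congrArg Q (coassoc_repr (rl i) rll rlr)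
    simp only [map_sum, hQt] at key
    calc ∑ j ∈ (rl i).index, antiComul k H ((rl i).left j) * ((rl i).right j ⊗ₜ[k] r.right i)
        = ∑ j ∈ (rl i).index, ∑ m ∈ (rll j).index,
            (antipode (R := k) ((rll j).right m) * (rl i).right j) ⊗ₜ[k]
              (antipode (R := k) ((rll j).left m) * r.right i) := by
          refine Finset.sum_congr rfl fun j _ => ?_
          rw [antiComul_apply (rll j), Finset.sum_mul]
          exact Finset.sum_congr rfl fun m _ => by rw [Algebra.TensorProduct.tmul_mul_tmul]
      _ = ∑ j ∈ (rl i).index, ∑ m ∈ (rlr j).index,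
            (antipode (R := k) ((rlr j).left m) * (rlr j).right m) ⊗ₜ[k]
              (antipode (R := k) ((rl i).left j) * r.right i) := key
      _ = ∑ j ∈ (rl i).index, Coalgebra.counit (R := k) ((rl i).right j) •
            ((1 : H) ⊗ₜ[k] (antipode (R := k) ((rl i).left j) * r.right i)) := by
          refine Finset.sum_congr rfl fun j _ => ?_
          rw [← sum_tmul, HopfAlgebra.sum_antipode_mul_eq_smul (rlr j), smul_tmul']
      _ = (1 : H) ⊗ₜ[k] (antipode (R := k) (r.left i) * r.right i) := by
          have h := congrArg ((TensorProduct.mk k H H 1) ∘ₗ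
            (LinearMap.mulRight k (r.right i)) ∘ₗ (antipode (R := k))) (counit_right_sum (rl i))
          rw [map_sum] at h
          simpa using h
  calc ∑ i ∈ r.index, ∑ j ∈ (rl i).index,
        antiComul k H ((rl i).left j) * ((rl i).right j ⊗ₜ[k] r.right i)
      = ∑ i ∈ r.index, (1 : H) ⊗ₜ[k] (antipode (R := k) (r.left i) * r.right i) :=
        Finset.sum_congr rfl step3
    _ = (1 : H) ⊗ₜ[k] ∑ i ∈ r.index, antipode (R := k) (r.left i) * r.right i :=
        (tmul_sum _ _ _).symm
    _ = cunit k H (H ⊗[k] H) a := by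
        rw [HopfAlgebra.sum_antipode_mul_eq_smul r, tmul_smul, cunit, comp_apply,
          Algebra.linearMap_apply, Algebra.algebraMap_eq_smul_one, Algebra.TensorProduct.one_def]

/-- The antipode is an anti-coalgebra morphism. -/
lemma comulS_eq_antiComul :
    (Coalgebra.comul (R := k) (A := H)) ∘ₗ antipode (R := k) = antiComul k H :=
  conv_unique conv_comul_comulS conv_antiComul_comul

lemma comul_antipode_repr {a : H} {ι : Type*} (r : Coalgebra.Repr k a ι) :
    Coalgebra.comul (R := k) (antipode (R := k) a) = ∑ i ∈ r.index,
      antipode (R := k) (r.right i) ⊗ₜ[k] antipode (R := k) (r.left i) := by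
  rw [show Coalgebra.comul (R := k) (antipode (R := k) a)
      = ((Coalgebra.comul (R := k) (A := H)) ∘ₗ antipode (R := k)) a from rfl,
    comulS_eq_antiComul, antiComul_apply r]

lemma counit_antipode (a : H) :
    Coalgebra.counit (R := k) (antipode (R := k) a) = Coalgebra.counit (R := k) a := by
  set r := ℛ k a
  calc Coalgebra.counit (R := k) (antipode (R := k) a)
      = Coalgebra.counit (R := k) (antipode (R := k)
          (∑ i ∈ r.index, Coalgebra.counit (R := k) (r.left i) • r.right i)) := by
        rw [counit_left_sum r]
    _ = ∑ i ∈ r.index, Coalgebra.counit (R := k) (r.left i) *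
          Coalgebra.counit (R := k) (antipode (R := k) (r.right i)) := by
        rw [map_sum, map_sum]
        exact Finset.sum_congr rfl fun i _ => by rw [map_smul, map_smul, smul_eq_mul]
    _ = ∑ i ∈ r.index, Coalgebra.counit (R := k) (r.left i * antipode (R := k) (r.right i)) := by
        exact Finset.sum_congr rfl fun i _ => (Bialgebra.counit_mul _ _).symm
    _ = Coalgebra.counit (R := k) a := by
        rw [← map_sum, HopfAlgebra.sum_mul_antipode_eq_smul r, map_smul, Bialgebra.counit_one,
          smul_eq_mul, mul_one]

end RIAux

namespace RIAux

lemma right_integral_repr {I : H →ₗ[k] k}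
    (hI : ∀ a : H, TensorProduct.lid k H (LinearMap.rTensor H I (Coalgebra.comul a)) = I a • (1 : H))
    {a : H} {ι : Type*} (r : Coalgebra.Repr k a ι) :
    ∑ i ∈ r.index, I (r.left i) • r.right i = I a • (1 : H) := by
  have h1 := hI a
  rw [← r.eq] at h1
  simpa only [map_sum, rTensor_tmul, lid_tmul] using h1

/-- A representation of `comul (h * S y)` built from representations of `comul h`, `comul y`. -/
def starRepr (h y : H) {ι κ : Type*} (rh : Coalgebra.Repr k h ι) (ry : Coalgebra.Repr k y κ) :
    Coalgebra.Repr k (h * antipode (R := k) y) (ι × κ) where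
  index := rh.index ×ˢ ry.index
  left := fun p => rh.left p.1 * antipode (R := k) (ry.right p.2)
  right := fun p => rh.right p.1 * antipode (R := k) (ry.left p.2)
  eq := by
    rw [Bialgebra.comul_mul, comul_antipode_repr ry, ← rh.eq, Finset.sum_mul_sum,
      Finset.sum_product]
    refine Finset.sum_congr rfl fun i _ => Finset.sum_congr rfl fun l _ => ?_
    rw [Algebra.TensorProduct.tmul_mul_tmul]

lemma star {I : H →ₗ[k] k}
    (hI : ∀ a : H, TensorProduct.lid k H (LinearMap.rTensor H I (Coalgebra.comul a)) = I a • (1 : H))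
    (h y : H) {ι κ : Type*} (rh : Coalgebra.Repr k h ι) (ry : Coalgebra.Repr k y κ) :
    I (h * antipode (R := k) y) • (1 : H) =
      ∑ i ∈ rh.index, ∑ l ∈ ry.index,
        I (rh.left i * antipode (R := k) (ry.right l)) •
          (rh.right i * antipode (R := k) (ry.left l)) := by
  rw [← right_integral_repr hI (starRepr h y rh ry), starRepr, Finset.sum_product]

end RIAux

end AuxSection

section MainAux
variable {k H}

set_option synthInstance.maxHeartbeats 400000 in
lemma RIAux.intMapL_eq (I : H →ₗ[k] k) (g h : H) {ι : Type*} (rh : Coalgebra.Repr k h ι) :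
    intMapL k H I (g ⊗ₜ[k] h) =
      ∑ i ∈ rh.index, I (rh.left i * HopfAlgebra.antipode (R := k) g) • rh.right i := by
  rw [intMapL]
  simp only [comp_apply, LinearEquiv.coe_coe, comm_tmul, rTensor_tmul, ← rh.eq, map_sum,
    sum_tmul, tmul_sum, assoc_tmul, lTensor_tmul, comm_tmul, assoc_symm_tmul, lid_tmul,
    intPair, mul'_apply]

set_option synthInstance.maxHeartbeats 400000 in
lemma RIAux.intMapR_eq (I : H →ₗ[k] k) (g h : H) {ι : Type*} (rg : Coalgebra.Repr k g ι) :
    intMapR k H I (g ⊗ₜ[k] h) =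
      ∑ j ∈ rg.index, I (h * HopfAlgebra.antipode (R := k) (rg.right j)) •
        HopfAlgebra.antipode (R := k) (HopfAlgebra.antipode (R := k) (rg.left j)) := by
  rw [intMapR]
  simp only [comp_apply, LinearEquiv.coe_coe, rTensor_tmul, ← rg.eq, map_sum, sum_tmul,
    tmul_sum, assoc_tmul, lTensor_tmul, comm_tmul, rid_tmul, intPair, mul'_apply]

end MainAux

/-- For a Hopf algebra `H` with nonzero right integral `∫_r` and injective antipode `S`, the
identity `∫_r(h₁ S(g)) h₂ = S²(g₁) ∫_r(h S(g₂))` holds for all `g, h ∈ H`. -/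
theorem right_integral_identity (I : H →ₗ[k] k) (hI : IsRightIntegral k H I) (hne : I ≠ 0)
    (hS : Function.Injective (HopfAlgebra.antipode (R := k) (A := H))) :
    ∀ g h : H, intMapL k H I (g ⊗ₜ[k] h) = intMapR k H I (g ⊗ₜ[k] h) := by
  intro g h
  have hI' : ∀ a : H, TensorProduct.lid k H (LinearMap.rTensor H I (Coalgebra.comul a))
      = I a • (1 : H) := hI
  set S : H →ₗ[k] H := HopfAlgebra.antipode (R := k) with hSdef
  set rh := ℛ k h with hrh
  set rg := ℛ k g with hrg
  set rl : ∀ j : rg.ι, Coalgebra.Repr k (rg.left j) (H × H) := fun j => ℛ k (rg.left j) with hrl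
  set rr : ∀ j : rg.ι, Coalgebra.Repr k (rg.right j) (H × H) := fun j => ℛ k (rg.right j) with hrr
  rw [RIAux.intMapL_eq I g h rh, RIAux.intMapR_eq I g h rg]
  -- the trilinear workhorse map
  set Φ : H ⊗[k] (H ⊗[k] H) →ₗ[k] H :=
    ∑ i ∈ rh.index,
      (LinearMap.mulLeft k (rh.right i) ∘ₗ LinearMap.mul' k H
        ∘ₗ (TensorProduct.comm k H H).toLinearMap
        ∘ₗ LinearMap.rTensor H (S ∘ₗ S)
        ∘ₗ LinearMap.lTensor H ((TensorProduct.rid k H).toLinearMap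
            ∘ₗ TensorProduct.map S (I ∘ₗ LinearMap.mulLeft k (rh.left i) ∘ₗ S))) with hPhi
  have hPhit : ∀ x y z : H, Φ (x ⊗ₜ[k] (y ⊗ₜ[k] z))
      = ∑ i ∈ rh.index, I (rh.left i * S z) • (rh.right i * (S y * S (S x))) := by
    intro x y z
    rw [hPhi, LinearMap.sum_apply]
    refine Finset.sum_congr rfl fun i _ => ?_
    simp only [comp_apply, lTensor_tmul, TensorProduct.map_tmul, LinearEquiv.coe_coe,
      rid_tmul, rTensor_tmul, tmul_smul, comm_tmul, smul_tmul', map_smul, mul'_apply,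
      LinearMap.mulLeft_apply, smul_mul_assoc]

  -- the "apply LHS as linear map" trick
  set L : H →ₗ[k] H :=
    ∑ i ∈ rh.index,
      LinearMap.toSpanSingleton k H (rh.right i) ∘ₗ I ∘ₗ LinearMap.mulLeft k (rh.left i) ∘ₗ S
    with hLdef
  have hLt : ∀ x : H, L x = ∑ i ∈ rh.index, I (rh.left i * S x) • rh.right i := by
    intro x
    rw [hLdef, LinearMap.sum_apply]
    exact Finset.sum_congr rfl fun i _ => by
      simp [LinearMap.toSpanSingleton_apply]
  have collapse : ∀ j : rg.ι,
      ∑ l ∈ (rl j).index, S ((rl j).right l) * S (S ((rl j).left l))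
        = Coalgebra.counit (R := k) (rg.left j) • (1 : H) := by
    intro j
    have h1 := HopfAlgebra.mul_antipode_lTensor_comul_apply (R := k) (A := H)
      (S (rg.left j))
    rw [RIAux.comul_antipode_repr (rl j)] at h1
    simp only [map_sum, lTensor_tmul, mul'_apply] at h1
    rw [h1, RIAux.counit_antipode, Algebra.algebraMap_eq_smul_one]
  calc ∑ i ∈ rh.index, I (rh.left i * S g) • rh.right i
      = L g := (hLt g).symm
    _ = L (∑ j ∈ rg.index, Coalgebra.counit (R := k) (rg.left j) • rg.right j) := by
        rw [RIAux.counit_left_sum rg]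
    _ = ∑ j ∈ rg.index, Coalgebra.counit (R := k) (rg.left j) •
          ∑ i ∈ rh.index, I (rh.left i * S (rg.right j)) • rh.right i := by
        rw [map_sum]
        exact Finset.sum_congr rfl fun j _ => by rw [map_smul, hLt]
    _ = ∑ j ∈ rg.index, ∑ l ∈ (rl j).index, Φ ((rl j).left l ⊗ₜ[k]
          ((rl j).right l ⊗ₜ[k] rg.right j)) := by
        refine Finset.sum_congr rfl fun j _ => ?_
        rw [Finset.smul_sum]
        rw [show ∑ l ∈ (rl j).index, Φ ((rl j).left l ⊗ₜ[k] ((rl j).right l ⊗ₜ[k] rg.right j))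
            = ∑ l ∈ (rl j).index, ∑ i ∈ rh.index, I (rh.left i * S (rg.right j)) •
                (rh.right i * (S ((rl j).right l) * S (S ((rl j).left l)))) from
          Finset.sum_congr rfl fun l _ => hPhit _ _ _]
        rw [Finset.sum_comm]
        refine Finset.sum_congr rfl fun i _ => ?_
        rw [← Finset.smul_sum, ← Finset.mul_sum, collapse j, mul_smul_comm, mul_one,
          smul_comm]
    _ = ∑ j ∈ rg.index, ∑ l ∈ (rr j).index, Φ (rg.left j ⊗ₜ[k]
          ((rr j).left l ⊗ₜ[k] (rr j).right l)) := by
        have key := congrArg Φ (RIAux.coassoc_repr rg rl rr)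
        simpa only [map_sum] using key
    _ = ∑ j ∈ rg.index, I (h * S (rg.right j)) • S (S (rg.left j)) := by
        refine Finset.sum_congr rfl fun j _ => ?_
        rw [show ∑ l ∈ (rr j).index, Φ (rg.left j ⊗ₜ[k] ((rr j).left l ⊗ₜ[k] (rr j).right l))
            = ∑ l ∈ (rr j).index, ∑ i ∈ rh.index, I (rh.left i * S ((rr j).right l)) •
                (rh.right i * (S ((rr j).left l) * S (S (rg.left j)))) from
          Finset.sum_congr rfl fun l _ => hPhit _ _ _]
        rw [Finset.sum_comm]
        have hst := RIAux.star hI' h (rg.right j) rh (rr j)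
        calc ∑ i ∈ rh.index, ∑ l ∈ (rr j).index, I (rh.left i * S ((rr j).right l)) •
              (rh.right i * (S ((rr j).left l) * S (S (rg.left j))))
            = (∑ i ∈ rh.index, ∑ l ∈ (rr j).index, I (rh.left i * S ((rr j).right l)) •
                (rh.right i * S ((rr j).left l))) * S (S (rg.left j)) := by
              rw [Finset.sum_mul]
              refine Finset.sum_congr rfl fun i _ => ?_
              rw [Finset.sum_mul]
              refine Finset.sum_congr rfl fun l _ => ?_
              rw [smul_mul_assoc, mul_assoc]
          _ = (I (h * S (rg.right j)) • (1 : H)) * S (S (rg.left j)) := by rw [← hst]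
          _ = I (h * S (rg.right j)) • S (S (rg.left j)) := by
              rw [smul_mul_assoc, one_mul]


end
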